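/- arXiv:2604.16458 — 3 statements merged into one kernel-verified Lean document; each statement's English description precedes it below -/
import Mathlib

section
/- Let $X_0, \xi_0, \ldots, \xi_{T-1}, \zeta_0, \ldots, \zeta_{T-1}$ be mutually independent Gaussian random vectors with $X_0 \sim N(m_0, \Sigma_0)$, $\xi_t \sim N(0, Q)$, $\zeta_t \sim N(0, R)$. Let $y_t$ satisfy $y_t = A^T y_{t+1} + H^T u_t$, $y_T = a$, and set $b = y_0$, $S_T = b^T m_0 - \sum_{t=0}^{T-1} u_t^T Z_t$ where $Z_t = H X_t + \zeta_t$ and $X_{t+1} = A X_t + \xi_t$. Then $\mathbb{E}\big[|a^T X_T - S_T|^2\big] = y_0^T \Sigma_0 y_0 + \sum_{t=0}^{T-1} \big( y_{t+1}^T Q y_{t+1} + u_t^T R u_t \big)$. -/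
open MeasureTheory ProbabilityTheory Matrix Finset Real
open scoped NNReal ENNReal

lemma SA.rpow_two_eq (x : ℝ) : x ^ (2:ℝ) = x ^ 2 := by
  rw [show (2:ℝ) = ((2:ℕ):ℝ) by norm_num, Real.rpow_natCast]

lemma SA.integrable_sq_mul_exp {b : ℝ} (hb : 0 < b) :
    Integrable (fun x : ℝ => x ^ 2 * Real.exp (-b * x ^ 2)) := by
  have h := integrable_rpow_mul_exp_neg_mul_sq hb (by norm_num : (-1:ℝ) < 2)
  simpa [SA.rpow_two_eq] using h

lemma SA.pdf_eq (v : ℝ≥0) :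
    gaussianPDFReal 0 v = fun x =>
      (Real.sqrt (2 * π * v))⁻¹ * Real.exp (-(2 * (v:ℝ))⁻¹ * x ^ 2) := by
  funext x
  rw [gaussianPDFReal]
  congr 1
  rw [sub_zero]
  field_simp

lemma SA.integral_sq_pdf (v : ℝ≥0) (hv : v ≠ 0) :
    ∫ x : ℝ, x ^ 2 * gaussianPDFReal 0 v x = v := by
  have hvpos : (0:ℝ) < v := by
    have : (0:ℝ) ≤ v := v.2
    rcases this.lt_or_eq with h | h
    · exact h
    · exact absurd (by exact_mod_cast h.symm) hv
  set c : ℝ := (Real.sqrt (2 * π * v))⁻¹ with hc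
  set b : ℝ := (2 * (v:ℝ))⁻¹ with hbdef
  have hb : 0 < b := by rw [hbdef]; positivity
  have hpdf := SA.pdf_eq v
  have hu : ∀ x : ℝ, HasDerivAt (fun x : ℝ => x) ((fun _ : ℝ => (1:ℝ)) x) x :=
    fun x => hasDerivAt_id x
  have hvd : ∀ x : ℝ, HasDerivAt (fun x : ℝ => (-(v:ℝ) * c) * Real.exp (-b * x ^ 2))
      ((fun x : ℝ => x * (c * Real.exp (-b * x ^ 2))) x) x := by
    intro x
    have h1 : HasDerivAt (fun x : ℝ => -b * x ^ 2) (-b * (2 * x)) x := by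
      simpa using (hasDerivAt_pow 2 x).const_mul (-b)
    have h2 := h1.exp.const_mul (-(v:ℝ) * c)
    refine h2.congr_deriv ?_
    have hvne : (v:ℝ) ≠ 0 := ne_of_gt hvpos
    rw [hbdef]
    field_simp
  have huv' : Integrable ((fun x : ℝ => x) * (fun x : ℝ => x * (c * Real.exp (-b * x ^ 2)))) := by
    have e : ((fun x : ℝ => x) * (fun x : ℝ => x * (c * Real.exp (-b * x ^ 2))))
        = fun x : ℝ => c * (x ^ 2 * Real.exp (-b * x ^ 2)) := by
      funext x; simp [Pi.mul_apply]; ring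
    rw [e]
    exact (SA.integrable_sq_mul_exp hb).const_mul c
  have hu'v : Integrable ((fun _ : ℝ => (1:ℝ)) * (fun x : ℝ => (-(v:ℝ) * c) * Real.exp (-b * x ^ 2))) := by
    have e : ((fun _ : ℝ => (1:ℝ)) * (fun x : ℝ => (-(v:ℝ) * c) * Real.exp (-b * x ^ 2)))
        = fun x : ℝ => (-(v:ℝ) * c) * Real.exp (-b * x ^ 2) := by
      funext x; simp
    rw [e]
    exact (integrable_exp_neg_mul_sq hb).const_mul _
  have huv : Integrable ((fun x : ℝ => x) * (fun x : ℝ => (-(v:ℝ) * c) * Real.exp (-b * x ^ 2))) := by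
    have e : ((fun x : ℝ => x) * (fun x : ℝ => (-(v:ℝ) * c) * Real.exp (-b * x ^ 2)))
        = fun x : ℝ => (-(v:ℝ) * c) * (x * Real.exp (-b * x ^ 2)) := by
      funext x; simp [Pi.mul_apply]; ring
    rw [e]
    exact (integrable_mul_exp_neg_mul_sq hb).const_mul _
  have key := integral_mul_deriv_eq_deriv_mul_of_integrable (fun x _ => hu x) (fun x _ => hvd x) huv' hu'v huv
  -- key : ∫ x, x * (x * (c * exp(-b x^2))) = -∫ x, 1 * ((-(v)*c) * exp(-b x^2))
  have hnorm : ∫ x : ℝ, c * Real.exp (-b * x ^ 2) = 1 := by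
    have h1 := integral_gaussianPDFReal_eq_one 0 hv
    rw [hpdf] at h1
    exact h1
  calc ∫ x : ℝ, x ^ 2 * gaussianPDFReal 0 v x
      = ∫ x : ℝ, x * (x * (c * Real.exp (-b * x ^ 2))) := by
        rw [hpdf]; congr 1; funext x; ring
    _ = -∫ x : ℝ, (1:ℝ) * ((-(v:ℝ) * c) * Real.exp (-b * x ^ 2)) := key
    _ = -∫ x : ℝ, (-(v:ℝ)) * (c * Real.exp (-b * x ^ 2)) :=
        congrArg Neg.neg (integral_congr_ae (Filter.Eventually.of_forall fun x => by ring))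
    _ = (v:ℝ) * ∫ x : ℝ, c * Real.exp (-b * x ^ 2) := by
        rw [integral_const_mul]; ring
    _ = v := by rw [hnorm, mul_one]

lemma SA.integral_fun_gaussianReal {v : ℝ≥0} (hv : v ≠ 0) (g : ℝ → ℝ) :
    ∫ x, g x ∂(gaussianReal 0 v) = ∫ x, gaussianPDFReal 0 v x * g x := by
  rw [gaussianReal_of_var_ne_zero _ hv,
    show gaussianPDF 0 v = fun x => ((Real.toNNReal (gaussianPDFReal 0 v x) : ℝ≥0) : ℝ≥0∞) from rfl,
    integral_withDensity_eq_integral_smul (measurable_gaussianPDFReal 0 v).real_toNNReal g]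
  congr 1
  funext x
  rw [NNReal.smul_def, smul_eq_mul, Real.coe_toNNReal _ (gaussianPDFReal_nonneg 0 v x)]

lemma SA.map_neg_gaussianReal (v : ℝ≥0) :
    Measure.map (fun x : ℝ => -x) (gaussianReal 0 v) = gaussianReal 0 v := by
  have h := gaussianReal_map_const_mul (μ := 0) (v := v) (-1)
  norm_num at h
  exact h

lemma SA.integral_id_gaussianReal0 (v : ℝ≥0) : ∫ x, x ∂(gaussianReal 0 v) = 0 := by
  have h1 : ∫ x, x ∂(gaussianReal 0 v)
      = ∫ x, x ∂(Measure.map (fun x : ℝ => -x) (gaussianReal 0 v)) := by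
    rw [SA.map_neg_gaussianReal]
  rw [integral_map (f := fun x : ℝ => x) (φ := fun x : ℝ => -x)
    (by fun_prop) measurable_id.aestronglyMeasurable] at h1
  rw [integral_neg] at h1
  linarith

lemma SA.integral_sq_gaussianReal (v : ℝ≥0) : ∫ x, x ^ 2 ∂(gaussianReal 0 v) = v := by
  by_cases hv : v = 0
  · subst hv
    rw [gaussianReal_zero_var]
    simp [integral_dirac]
  · rw [SA.integral_fun_gaussianReal hv]
    rw [show (fun x : ℝ => gaussianPDFReal 0 v x * x ^ 2)
      = fun x : ℝ => x ^ 2 * gaussianPDFReal 0 v x from funext fun x => mul_comm _ _]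
    exact SA.integral_sq_pdf v hv

lemma SA.memℒp_id_two_gaussianReal (v : ℝ≥0) : MemLp id 2 (gaussianReal 0 v) := by
  rw [memLp_two_iff_integrable_sq aestronglyMeasurable_id]
  by_cases hv : v = 0
  · subst hv
    rw [gaussianReal_zero_var]
    refine ⟨(measurable_id.pow_const 2).aestronglyMeasurable, ?_⟩
    rw [HasFiniteIntegral, lintegral_dirac]
    simp
  · have hvpos : (0:ℝ) < v := by
      have : (0:ℝ) ≤ v := v.2
      rcases this.lt_or_eq with h | h
      · exact h
      · exact absurd (by exact_mod_cast h.symm) hv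
    have hb : (0:ℝ) < (2 * (v:ℝ))⁻¹ := by positivity
    rw [gaussianReal_of_var_ne_zero _ hv,
      show gaussianPDF 0 v = fun x => ((Real.toNNReal (gaussianPDFReal 0 v x) : ℝ≥0) : ℝ≥0∞) from rfl,
      integrable_withDensity_iff_integrable_smul (measurable_gaussianPDFReal 0 v).real_toNNReal]
    have e : (fun x : ℝ => Real.toNNReal (gaussianPDFReal 0 v x) • ((id x) ^ 2))
        = fun x : ℝ => (Real.sqrt (2 * π * v))⁻¹ * (x ^ 2 * Real.exp (-(2 * (v:ℝ))⁻¹ * x ^ 2)) := by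
      funext x
      rw [NNReal.smul_def, smul_eq_mul, Real.coe_toNNReal _ (gaussianPDFReal_nonneg 0 v x),
        SA.pdf_eq v]
      simp only [id]
      ring
    rw [e]
    exact (SA.integrable_sq_mul_exp hb).const_mul _

lemma SA.gauss_facts {Ω : Type*} {mΩ : MeasurableSpace Ω} (μ : Measure Ω) [IsProbabilityMeasure μ]
    {Y : Ω → ℝ} (hYm : Measurable Y) {v : ℝ≥0} (hmap : Measure.map Y μ = gaussianReal 0 v) :
    MemLp Y 2 μ ∧ (∫ ω, Y ω ∂μ = 0) ∧ variance Y μ = v := by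
  have hmem : MemLp Y 2 μ := by
    have h := SA.memℒp_id_two_gaussianReal v
    rw [← hmap] at h
    exact (memLp_map_measure_iff aestronglyMeasurable_id hYm.aemeasurable).mp h
  have hmean : ∫ ω, Y ω ∂μ = 0 := by
    have h1 : ∫ x, x ∂(Measure.map Y μ) = ∫ ω, Y ω ∂μ :=
      integral_map hYm.aemeasurable aestronglyMeasurable_id
    rw [← h1, hmap, SA.integral_id_gaussianReal0]
  have hsq : ∫ ω, (Y ω) ^ 2 ∂μ = v := by
    have h1 : ∫ x, x ^ 2 ∂(Measure.map Y μ) = ∫ ω, (Y ω) ^ 2 ∂μ :=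
      integral_map hYm.aemeasurable (continuous_pow 2).aestronglyMeasurable
    rw [← h1, hmap, SA.integral_sq_gaussianReal]
  refine ⟨hmem, hmean, ?_⟩
  rw [variance_eq_sub hmem]
  have h2 : μ[Y ^ 2] = (v:ℝ) := by
    rw [show (Y ^ 2 : Ω → ℝ) = fun ω => (Y ω) ^ 2 from rfl]
    exact hsq
  rw [h2, hmean]
  ring

lemma SA.main_sum {Ω : Type*} {mΩ : MeasurableSpace Ω} (μ : Measure Ω) [IsProbabilityMeasure μ]
    {ι : Type*} [Fintype ι] (f : ι → Ω → ℝ) (v : ι → ℝ≥0)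
    (hmem : ∀ i, MemLp (f i) 2 μ) (hmean : ∀ i, ∫ ω, f i ω ∂μ = 0)
    (hvar : ∀ i, variance (f i) μ = v i)
    (hpair : ∀ i j, i ≠ j → IndepFun (f i) (f j) μ) :
    ∫ ω, (∑ i, f i ω) ^ 2 ∂μ = ∑ i, (v i : ℝ) := by
  classical
  have hsum := IndepFun.variance_sum (μ := μ) (X := f) (s := Finset.univ)
    (fun i _ => hmem i) (fun i _ j _ hij => hpair i j hij)
  have hWmem : MemLp (∑ i, f i) 2 μ := memLp_finset_sum' _ fun i _ => hmem i
  have hWvar := variance_eq_sub hWmem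
  have hmean' : μ[∑ i, f i] = 0 := by
    have h1 : ∫ ω, (∑ i, f i) ω ∂μ = ∑ i, ∫ ω, f i ω ∂μ := by
      simp only [Finset.sum_apply]
      exact integral_finset_sum _ fun i _ => (hmem i).integrable one_le_two
    rw [show μ[∑ i, f i] = ∫ ω, (∑ i, f i) ω ∂μ from rfl, h1]
    simp [hmean]
  have hfun : (fun ω => (∑ i, f i ω) ^ 2) = (∑ i, f i) ^ 2 := by
    funext ω; simp [Finset.sum_apply]
  calc ∫ ω, (∑ i, f i ω) ^ 2 ∂μ = μ[(∑ i, f i) ^ 2] := by rw [hfun]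
    _ = variance (∑ i, f i) μ + μ[∑ i, f i] ^ 2 := by rw [hWvar]; ring
    _ = ∑ i, (v i : ℝ) := by rw [hmean', hsum]; simp [hvar]

/-- The mean-squared estimation error of the dual linear estimator equals the
deterministic quadratic control cost. -/
theorem stmt_1 {Ω : Type*} {mΩ : MeasurableSpace Ω} (μ : Measure Ω) [IsProbabilityMeasure μ]
    (n m T : ℕ) (A S0 Q : Matrix (Fin n) (Fin n) ℝ) (H : Matrix (Fin m) (Fin n) ℝ)
    (R : Matrix (Fin m) (Fin m) ℝ)
    (hS0 : S0.PosSemidef) (hQ : Q.PosSemidef) (hR : R.PosSemidef)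
    (m0 a : Fin n → ℝ) (u : ℕ → Fin m → ℝ) (y : ℕ → Fin n → ℝ)
    (X0 : Ω → Fin n → ℝ) (ξ : ℕ → Ω → Fin n → ℝ) (ζ : ℕ → Ω → Fin m → ℝ)
    (hX0m : Measurable X0) (hξm : ∀ t, Measurable (ξ t)) (hζm : ∀ t, Measurable (ζ t))
    (hX0 : ∀ x : Fin n → ℝ,
      Measure.map (fun ω => x ⬝ᵥ X0 ω) μ = gaussianReal (x ⬝ᵥ m0) (Real.toNNReal (x ⬝ᵥ (S0 *ᵥ x))))
    (hξ : ∀ t < T, ∀ x : Fin n → ℝ,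
      Measure.map (fun ω => x ⬝ᵥ ξ t ω) μ = gaussianReal 0 (Real.toNNReal (x ⬝ᵥ (Q *ᵥ x))))
    (hζ : ∀ t < T, ∀ x : Fin m → ℝ,
      Measure.map (fun ω => x ⬝ᵥ ζ t ω) μ = gaussianReal 0 (Real.toNNReal (x ⬝ᵥ (R *ᵥ x))))
    (hIndep : iIndep
      (fun i : Unit ⊕ Fin T ⊕ Fin T =>
        match i with
        | Sum.inl _ => MeasurableSpace.comap X0 inferInstance
        | Sum.inr (Sum.inl t) => MeasurableSpace.comap (ξ t) inferInstance
        | Sum.inr (Sum.inr t) => MeasurableSpace.comap (ζ t) inferInstance) μ)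
    (hy : ∀ t < T, y t = Aᵀ *ᵥ y (t + 1) + Hᵀ *ᵥ u t) (hyT : y T = a)
    (X : ℕ → Ω → Fin n → ℝ) (Z : ℕ → Ω → Fin m → ℝ) (S : Ω → ℝ)
    (hX0def : X 0 = X0)
    (hXrec : ∀ t ω, X (t + 1) ω = A *ᵥ X t ω + ξ t ω)
    (hZ : ∀ t ω, Z t ω = H *ᵥ X t ω + ζ t ω)
    (hS : ∀ ω, S ω = y 0 ⬝ᵥ m0 - ∑ t ∈ Finset.range T, u t ⬝ᵥ Z t ω) :
    ∫ ω, (a ⬝ᵥ X T ω - S ω) ^ 2 ∂μ =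
      y 0 ⬝ᵥ (S0 *ᵥ y 0) +
        ∑ t ∈ Finset.range T, (y (t + 1) ⬝ᵥ (Q *ᵥ y (t + 1)) + u t ⬝ᵥ (R *ᵥ u t)) := by
  classical
  have hnn0 : 0 ≤ y 0 ⬝ᵥ (S0 *ᵥ y 0) := by simpa using hS0.dotProduct_mulVec_nonneg (y 0)
  have hnnQ : ∀ t : ℕ, 0 ≤ y (t + 1) ⬝ᵥ (Q *ᵥ y (t + 1)) := fun t => by simpa using hQ.dotProduct_mulVec_nonneg (y (t + 1))
  have hnnR : ∀ t : ℕ, 0 ≤ u t ⬝ᵥ (R *ᵥ u t) := fun t => by simpa using hR.dotProduct_mulVec_nonneg (u t)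
  have mdot : ∀ {k : ℕ} (c : Fin k → ℝ), Measurable (fun x : Fin k → ℝ => c ⬝ᵥ x) := by
    intro k c
    simp only [dotProduct]
    exact Finset.measurable_sum _ fun j _ => measurable_const.mul (measurable_pi_apply j)
  set f : Unit ⊕ Fin T ⊕ Fin T → Ω → ℝ := fun i =>
    match i with
    | Sum.inl _ => fun ω => y 0 ⬝ᵥ X0 ω - y 0 ⬝ᵥ m0
    | Sum.inr (Sum.inl t) => fun ω => y ((t : ℕ) + 1) ⬝ᵥ ξ (t : ℕ) ω
    | Sum.inr (Sum.inr t) => fun ω => u (t : ℕ) ⬝ᵥ ζ (t : ℕ) ω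
    with hfdef
  set v : Unit ⊕ Fin T ⊕ Fin T → ℝ≥0 := fun i =>
    match i with
    | Sum.inl _ => Real.toNNReal (y 0 ⬝ᵥ (S0 *ᵥ y 0))
    | Sum.inr (Sum.inl t) => Real.toNNReal (y ((t : ℕ) + 1) ⬝ᵥ (Q *ᵥ y ((t : ℕ) + 1)))
    | Sum.inr (Sum.inr t) => Real.toNNReal (u (t : ℕ) ⬝ᵥ (R *ᵥ u (t : ℕ)))
    with hvdef
  have hfm : ∀ i, Measurable (f i) := by
    rintro (⟨⟩ | t | t)
    · exact ((mdot (y 0)).comp hX0m).sub measurable_const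
    · exact (mdot _).comp (hξm t)
    · exact (mdot _).comp (hζm t)
  have hfmap : ∀ i, Measure.map (f i) μ = gaussianReal 0 (v i) := by
    rintro (⟨⟩ | t | t)
    · have hc : f (Sum.inl ()) = (fun x : ℝ => x + -(y 0 ⬝ᵥ m0)) ∘ (fun ω => y 0 ⬝ᵥ X0 ω) := by
        funext ω; simp [hfdef, sub_eq_add_neg]
      rw [hc, ← Measure.map_map (measurable_add_const _)
        (show Measurable fun ω => y 0 ⬝ᵥ X0 ω from (mdot (y 0)).comp hX0m), hX0 (y 0),
        gaussianReal_map_add_const]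
      norm_num
      rfl
    · exact hξ (t : ℕ) t.isLt _
    · exact hζ (t : ℕ) t.isLt _
  have hfacts : ∀ i, MemLp (f i) 2 μ ∧ (∫ ω, f i ω ∂μ = 0) ∧ variance (f i) μ = v i :=
    fun i => SA.gauss_facts μ (hfm i) (hfmap i)
  have comp_le : ∀ {k : ℕ} (φ : (Fin k → ℝ) → ℝ) (g : Ω → Fin k → ℝ), Measurable φ →
      MeasurableSpace.comap (fun ω => φ (g ω)) inferInstance
        ≤ MeasurableSpace.comap g inferInstance := by
    intro k φ g hφ
    rw [show (fun ω => φ (g ω)) = φ ∘ g from rfl, ← MeasurableSpace.comap_comp]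
    exact MeasurableSpace.comap_mono (measurable_iff_comap_le.mp hφ)
  have hle : ∀ i, MeasurableSpace.comap (f i) inferInstance ≤
      (match i with
        | Sum.inl _ => MeasurableSpace.comap X0 inferInstance
        | Sum.inr (Sum.inl t) => MeasurableSpace.comap (ξ t) inferInstance
        | Sum.inr (Sum.inr t) => MeasurableSpace.comap (ζ t) inferInstance) := by
    rintro (⟨⟩ | t | t)
    · exact comp_le (fun x => y 0 ⬝ᵥ x - y 0 ⬝ᵥ m0) X0 ((mdot (y 0)).sub measurable_const)
    · exact comp_le _ (ξ (t : ℕ)) (mdot _)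
    · exact comp_le _ (ζ (t : ℕ)) (mdot _)
  have hpair : ∀ i j, i ≠ j → IndepFun (f i) (f j) μ := by
    intro i j hij
    have h := hIndep.indep hij
    exact indep_of_indep_of_le_left (indep_of_indep_of_le_right h (hle j)) (hle i)
  -- pointwise identity
  have main : ∀ ω, ∀ k, k ≤ T → y k ⬝ᵥ X k ω =
      y 0 ⬝ᵥ X0 ω + ∑ t ∈ Finset.range k,
        (y (t + 1) ⬝ᵥ ξ t ω + u t ⬝ᵥ ζ t ω - u t ⬝ᵥ Z t ω) := by
    intro ω k
    induction k with
    | zero => intro _; simp [hX0def]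
    | succ k ih =>
      intro hk
      have hk' : k < T := hk
      rw [Finset.sum_range_succ, ← add_assoc, ← ih (Nat.le_of_succ_le hk)]
      rw [hXrec, hZ, hy k hk']
      simp only [dotProduct_add, add_dotProduct, Matrix.dotProduct_mulVec,
        Matrix.mulVec_transpose]
      ring
  have hkey : ∀ ω, a ⬝ᵥ X T ω - S ω = ∑ i, f i ω := by
    intro ω
    have h1 := main ω T le_rfl
    rw [← hyT, h1, hS ω, Finset.sum_sub_distrib, Finset.sum_add_distrib]
    rw [Fintype.sum_sum_type, Fintype.sum_sum_type]
    simp only [hfdef, Finset.univ_unique, Finset.sum_singleton]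
    rw [Fin.sum_univ_eq_sum_range (fun t => y (t + 1) ⬝ᵥ ξ t ω),
      Fin.sum_univ_eq_sum_range (fun t => u t ⬝ᵥ ζ t ω)]
    ring
  have hmain := SA.main_sum μ f v (fun i => (hfacts i).1) (fun i => (hfacts i).2.1)
    (fun i => (hfacts i).2.2) hpair
  calc ∫ ω, (a ⬝ᵥ X T ω - S ω) ^ 2 ∂μ = ∫ ω, (∑ i, f i ω) ^ 2 ∂μ := by
        simp only [hkey]
    _ = ∑ i, (v i : ℝ) := hmain
    _ = y 0 ⬝ᵥ (S0 *ᵥ y 0) +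
        ∑ t ∈ Finset.range T, (y (t + 1) ⬝ᵥ (Q *ᵥ y (t + 1)) + u t ⬝ᵥ (R *ᵥ u t)) := by
        rw [Fintype.sum_sum_type, Fintype.sum_sum_type]
        simp only [hvdef, Finset.univ_unique, Finset.sum_singleton]
        rw [Fin.sum_univ_eq_sum_range
            (fun t => ((Real.toNNReal (y (t + 1) ⬝ᵥ (Q *ᵥ y (t + 1)))) : ℝ)),
          Fin.sum_univ_eq_sum_range (fun t => ((Real.toNNReal (u t ⬝ᵥ (R *ᵥ u t))) : ℝ)),
          ← Finset.sum_add_distrib]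
        rw [Real.coe_toNNReal _ hnn0]
        congr 1
        refine Finset.sum_congr rfl fun t _ => ?_
        rw [Real.coe_toNNReal _ (hnnQ t), Real.coe_toNNReal _ (hnnR t)]
end

section
/- Let $m = 1$, $\Sigma \succeq 0$ symmetric $n \times n$, $H \in \mathbb{R}^{1\times n}$, $R > 0$, $K = \Sigma H^T (H\Sigma H^T + R)^{-1}$, and let $\alpha \in \mathbb{R}$ satisfy $\frac{H\Sigma H^T}{H\Sigma H^T + R}\alpha^2 - 2\alpha + 1 = 0$. Then the ansatz $C = (A - \alpha A K H)^T$ satisfies the covariance-matching equation with $\gamma_1 = 1$, $\gamma_2 = 0$: $C^T \Sigma C = \big(A - \tfrac{1}{2} A K H\big) \Sigma \big(A - \tfrac{1}{2} A K H\big)^T - \tfrac{1}{4} A K H \Sigma H^T K^T A^T$. -/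
open Matrix

/-- In the scalar-observation case (m = 1), the ansatz C = (A - α A K H)ᵀ with α solving
the EnSRF quadratic equation satisfies the covariance-matching equation with γ₁ = 1, γ₂ = 0. -/
theorem stmt_6 (n : ℕ) (A Sig : Matrix (Fin n) (Fin n) ℝ) (H : Matrix (Fin 1) (Fin n) ℝ)
    (R : ℝ) (hSig : Sig.PosSemidef) (hR : 0 < R) (α : ℝ)
    (hα : (H * Sig * Hᵀ) 0 0 / ((H * Sig * Hᵀ) 0 0 + R) * α ^ 2 - 2 * α + 1 = 0) :
    let K := ((H * Sig * Hᵀ) 0 0 + R)⁻¹ • (Sig * Hᵀ)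
    let C := (A - α • (A * K * H))ᵀ
    Cᵀ * Sig * C =
      (A - (1 / 2 : ℝ) • (A * K * H)) * Sig * (A - (1 / 2 : ℝ) • (A * K * H))ᵀ -
        (1 / 4 : ℝ) • (A * K * H * Sig * Hᵀ * Kᵀ * Aᵀ) := by
  intro K C
  have hS : Sigᵀ = Sig := hSig.isHermitian
  set s := (H * Sig * Hᵀ) 0 0 with hs
  have h11 : H * Sig * Hᵀ = s • 1 := by
    ext i j
    fin_cases i; fin_cases j
    simp [hs]
  have hd : s + R ≠ 0 := by
    have hP : (H * Sig * Hᵀ).PosSemidef := by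
      have := hSig.mul_mul_conjTranspose_same H
      simpa using this
    have h0 : 0 ≤ s := by
      exact hP.diag_nonneg
    positivity
  have mid : ∀ (Y : Matrix (Fin 1) (Fin n) ℝ), H * (Sig * (Hᵀ * Y)) = s • Y := by
    intro Y
    rw [← Matrix.mul_assoc, ← Matrix.mul_assoc, h11, Matrix.smul_mul, Matrix.one_mul]
  show (A - α • (A * K * H))ᵀᵀ * Sig * (A - α • (A * K * H))ᵀ = _
  rw [transpose_transpose]
  simp only [K, transpose_sub, transpose_smul, transpose_mul, transpose_transpose, hS, ← hs]
  simp only [Matrix.sub_mul, Matrix.mul_sub, Matrix.smul_mul, Matrix.mul_smul, smul_smul,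
    Matrix.mul_assoc]
  simp only [mid, smul_smul, Matrix.mul_smul]
  match_scalars
  · ring
  · linear_combination (s + R)⁻¹ * hα
end

section
/- Setting $\gamma_1 = \gamma_2 = 0$, the defining equation for $C$ reads $C^T \Sigma C = \big(A - \tfrac{1}{2} A K H\big)\Sigma\big(A - \tfrac{1}{2} A K H\big)^T - \tfrac{1}{4} A K H \Sigma H^T K^T A^T + Q$, and the right-hand side equals the full Kalman Riccati update $\Sigma^+ = A\Sigma A^T + Q - A\Sigma H^T (H\Sigma H^T + R)^{-1} H \Sigma A^T$. In particular, if $\Sigma \succ 0$, a solution $C$ exists since $\Sigma^+ \succeq 0$. -/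
open Matrix

/-- For γ₁ = γ₂ = 0 the right-hand side of the defining equation for C equals the full
Kalman Riccati update Σ⁺, which is positive semidefinite, and a solution C of
CᵀΣC = Σ⁺ exists when Σ ≻ 0. -/
theorem stmt_12 (n m : ℕ) (A Sig Q : Matrix (Fin n) (Fin n) ℝ) (H : Matrix (Fin m) (Fin n) ℝ)
    (R : Matrix (Fin m) (Fin m) ℝ) (hSig : Sig.PosDef) (hQ : Q.PosSemidef) (hR : R.PosDef) :
    let K := Sig * Hᵀ * (H * Sig * Hᵀ + R)⁻¹
    let rhs := (A - (1 / 2 : ℝ) • (A * K * H)) * Sig * (A - (1 / 2 : ℝ) • (A * K * H))ᵀ -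
      (1 / 4 : ℝ) • (A * K * H * Sig * Hᵀ * Kᵀ * Aᵀ) + Q
    let Sigp := A * Sig * Aᵀ + Q - A * Sig * Hᵀ * (H * Sig * Hᵀ + R)⁻¹ * H * Sig * Aᵀ
    rhs = Sigp ∧ Sigp.PosSemidef ∧ ∃ C : Matrix (Fin n) (Fin n) ℝ, Cᵀ * Sig * C = rhs := by
  intro K rhs Sigp
  have hSigT : Sigᵀ = Sig := by
    rw [← conjTranspose_eq_transpose_of_trivial]; exact hSig.isHermitian
  have hS : (H * Sig * Hᵀ + R).PosDef := by
    have h := hSig.posSemidef.mul_mul_conjTranspose_same H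
    rw [conjTranspose_eq_transpose_of_trivial] at h
    exact Matrix.PosDef.posSemidef_add h hR
  have hSdet : IsUnit (H * Sig * Hᵀ + R).det := hS.det_pos.ne'.isUnit
  have hSinvT : ((H * Sig * Hᵀ + R)⁻¹)ᵀ = (H * Sig * Hᵀ + R)⁻¹ := by
    rw [transpose_nonsing_inv, ← conjTranspose_eq_transpose_of_trivial, hS.isHermitian]
  rw [Matrix.mul_assoc H Sig Hᵀ] at hSinvT
  have hc : ∀ B : Matrix (Fin m) (Fin n) ℝ,
      (H * (Sig * Hᵀ) + R)⁻¹ * ((H * (Sig * Hᵀ) + R) * B) = B := by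
    intro B
    apply Matrix.nonsing_inv_mul_cancel_left
    rwa [← Matrix.mul_assoc]
  have hRB : ∀ B : Matrix (Fin m) (Fin n) ℝ,
      R * B = (H * (Sig * Hᵀ) + R) * B - H * (Sig * (Hᵀ * B)) := by
    intro B
    simp only [Matrix.add_mul, ← Matrix.mul_assoc]
    abel
  have h1 : rhs = Sigp := by
    show (A - (1 / 2 : ℝ) • (A * K * H)) * Sig * (A - (1 / 2 : ℝ) • (A * K * H))ᵀ -
        (1 / 4 : ℝ) • (A * K * H * Sig * Hᵀ * Kᵀ * Aᵀ) + Q =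
      A * Sig * Aᵀ + Q - A * Sig * Hᵀ * (H * Sig * Hᵀ + R)⁻¹ * H * Sig * Aᵀ
    simp only [K, transpose_sub, transpose_smul, transpose_mul, transpose_transpose,
      hSigT, Matrix.sub_mul, Matrix.mul_sub, smul_mul_assoc, mul_smul_comm, smul_smul,
      smul_sub, Matrix.mul_assoc, hSinvT, hRB, hc]
    module
  have hJ : Sigp = (A - A * K * H) * Sig * (A - A * K * H)ᵀ + (A * K) * R * (A * K)ᵀ + Q := by
    show A * Sig * Aᵀ + Q - A * Sig * Hᵀ * (H * Sig * Hᵀ + R)⁻¹ * H * Sig * Aᵀ = _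
    simp only [K, transpose_sub, transpose_smul, transpose_mul, transpose_transpose,
      hSigT, Matrix.sub_mul, Matrix.mul_sub, smul_mul_assoc, mul_smul_comm, smul_smul,
      smul_sub, Matrix.mul_assoc, hSinvT, hRB, hc]
    module
  have h2 : Sigp.PosSemidef := by
    rw [hJ]
    have p1 := hSig.posSemidef.mul_mul_conjTranspose_same (A - A * K * H)
    have p2 := hR.posSemidef.mul_mul_conjTranspose_same (A * K)
    rw [conjTranspose_eq_transpose_of_trivial] at p1 p2
    exact (p1.add p2).add hQ
  refine ⟨h1, h2, ?_⟩
  set s1 := (open scoped MatrixOrder in CFC.sqrt Sig) with hs1def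
  set s2 := (open scoped MatrixOrder in CFC.sqrt Sigp) with hs2def
  have hs1 : s1 * s1 = Sig := by
    open scoped MatrixOrder in exact CFC.sqrt_mul_sqrt_self Sig hSig.posSemidef.nonneg
  have hs2 : s2 * s2 = Sigp := by
    open scoped MatrixOrder in exact CFC.sqrt_mul_sqrt_self Sigp h2.nonneg
  have hdet1 : IsUnit s1.det := by
    have hd : s1.det * s1.det = Sig.det := by rw [← det_mul, hs1]
    have : Sig.det ≠ 0 := hSig.det_pos.ne'
    have : s1.det ≠ 0 := fun h => this (by rw [← hd, h, mul_zero])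
    exact this.isUnit
  have hs1T : s1ᵀ = s1 := by
    rw [← conjTranspose_eq_transpose_of_trivial]; open scoped MatrixOrder in exact (CFC.sqrt_nonneg Sig).posSemidef.1
  have hs2T : s2ᵀ = s2 := by
    rw [← conjTranspose_eq_transpose_of_trivial]; open scoped MatrixOrder in exact (CFC.sqrt_nonneg Sigp).posSemidef.1
  refine ⟨s1⁻¹ * s2, ?_⟩
  rw [h1, transpose_mul, transpose_nonsing_inv, hs1T, hs2T, ← hs1, ← hs2]
  calc s2 * s1⁻¹ * (s1 * s1) * (s1⁻¹ * s2)
      = s2 * (s1⁻¹ * s1) * (s1 * s1⁻¹) * s2 := by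
        simp only [Matrix.mul_assoc]
    _ = s2 * s2 := by
        rw [Matrix.nonsing_inv_mul _ hdet1, Matrix.mul_nonsing_inv _ hdet1,
          Matrix.mul_one, Matrix.mul_one]
end
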